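/- If 0 < ρ < π, then the sphere parametrization map S_ρ(u, v) = γ_{u,v}(ρ) is injective on the domain (−π, π] × (−π/2, π/2). (This is the 'no self-intersection' direction of Proposition 2.3: the geodesic sphere of radius ρ in S²×ℝ exists, i.e. is free of self-intersections, precisely for ρ ∈ [0, π).) -/

import Mathlib

open Real

/-- The geodesic curves of `S² × ℝ` starting at `(1,0,0)` in the Euclidean model,
with longitude `u`, altitude `v` and arc-length parameter `τ` (equation (2.2)). -/
noncomputable def geo (u v τ : ℝ) : EuclideanSpace ℝ (Fin 3) :=
  (WithLp.equiv 2 (Fin 3 → ℝ)).symm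
    ![Real.exp (τ * Real.sin v) * Real.cos (τ * Real.cos v),
      Real.exp (τ * Real.sin v) * Real.sin (τ * Real.cos v) * Real.cos u,
      Real.exp (τ * Real.sin v) * Real.sin (τ * Real.cos v) * Real.sin u]

/-!
The point `γ_{u,v}(ρ)` has Euclidean norm `e^{ρ sin v}`, which recovers `sin v` and
hence `v ∈ (−π/2, π/2)`. Since then `0 < ρ cos v < π`, the common factor
`e^{ρ sin v} sin (ρ cos v)` of the last two coordinates is nonzero, so they recover
`(cos u, sin u)` and hence `u ∈ (−π, π]`.
-/

theorem Real.eq_of_cos_eq_of_sin_eq {x y : ℝ} (hx : x ∈ Set.Ioc (-π) π)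
    (hy : y ∈ Set.Ioc (-π) π) (hcos : cos x = cos y) (hsin : sin x = sin y) : x = y := by
  rw [← Complex.arg_cos_add_sin_mul_I hx, ← Complex.arg_cos_add_sin_mul_I hy,
    ← Complex.ofReal_cos, ← Complex.ofReal_sin, ← Complex.ofReal_cos, ← Complex.ofReal_sin,
    hcos, hsin]

theorem Real.sin_mul_cos_pos {ρ v : ℝ} (h0 : 0 < ρ) (hπ : ρ < π)
    (hv : v ∈ Set.Ioo (-(π / 2)) (π / 2)) : 0 < sin (ρ * cos v) := by
  have hcos : 0 < cos v := cos_pos_of_mem_Ioo hv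
  refine sin_pos_of_pos_of_lt_pi (by positivity) ?_
  calc ρ * cos v ≤ ρ := mul_le_of_le_one_right h0.le (cos_le_one v)
    _ < π := hπ

theorem norm_geo (u v τ : ℝ) : ‖geo u v τ‖ = exp (τ * sin v) := by
  rw [EuclideanSpace.norm_eq, Fin.sum_univ_three, ← sqrt_sq (exp_pos (τ * sin v)).le]
  congr 1
  simp only [geo, WithLp.equiv_symm_apply, PiLp.toLp_apply, Matrix.cons_val_zero,
    Matrix.cons_val_one, Matrix.cons_val_two, Matrix.head_cons, Matrix.tail_cons, norm_eq_abs,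
    sq_abs]
  linear_combination (exp (τ * sin v) * sin (τ * cos v)) ^ 2 * sin_sq_add_cos_sq u
    + exp (τ * sin v) ^ 2 * sin_sq_add_cos_sq (τ * cos v)

theorem sin_eq_of_geo_eq {u₁ u₂ v₁ v₂ τ : ℝ} (hτ : τ ≠ 0) (h : geo u₁ v₁ τ = geo u₂ v₂ τ) :
    sin v₁ = sin v₂ := by
  have hnorm := congrArg norm h
  rw [norm_geo, norm_geo] at hnorm
  exact mul_left_cancel₀ hτ (exp_injective hnorm)

theorem cos_eq_and_sin_eq_of_geo_eq {u₁ u₂ v τ : ℝ} (hsin : sin (τ * cos v) ≠ 0)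
    (h : geo u₁ v τ = geo u₂ v τ) : cos u₁ = cos u₂ ∧ sin u₁ = sin u₂ := by
  have hr : exp (τ * sin v) * sin (τ * cos v) ≠ 0 := mul_ne_zero (exp_pos _).ne' hsin
  have h1 := congrArg (· 1) h
  have h2 := congrArg (· 2) h
  simp only [geo, WithLp.equiv_symm_apply, PiLp.toLp_apply, Matrix.cons_val_one,
    Matrix.cons_val_two, Matrix.head_cons, Matrix.tail_cons] at h1 h2
  exact ⟨mul_left_cancel₀ hr h1, mul_left_cancel₀ hr h2⟩

theorem sphere_param_injOn (ρ : ℝ) (h0 : 0 < ρ) (hπ : ρ < π) :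
    Set.InjOn (fun p : ℝ × ℝ => geo p.1 p.2 ρ)
      (Set.Ioc (-π) π ×ˢ Set.Ioo (-(π / 2)) (π / 2)) := by
  rintro ⟨u₁, v₁⟩ ⟨hu₁, hv₁⟩ ⟨u₂, v₂⟩ ⟨hu₂, hv₂⟩ h
  have hv : v₁ = v₂ :=
    injOn_sin (Set.Ioo_subset_Icc_self hv₁) (Set.Ioo_subset_Icc_self hv₂)
      (sin_eq_of_geo_eq h0.ne' h)
  subst hv
  obtain ⟨hcos, hsin⟩ := cos_eq_and_sin_eq_of_geo_eq (sin_mul_cos_pos h0 hπ hv₁).ne' h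
  exact Prod.ext (eq_of_cos_eq_of_sin_eq hu₁ hu₂ hcos hsin) rfl
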